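/- Let B be a C*-algebra, E a Hilbert B-module, and K an ideal submodule of E. Then B_K (the closed linear span of {⟨k,k'⟩ : k, k' ∈ K}) is a closed two-sided ideal of B, K equals the closed linear span of {x·b : x ∈ E, b ∈ B_K}, and B_K ⊆ I for every closed two-sided ideal I of B such that K equals the closed linear span of {x·i : x ∈ E, i ∈ I}; that is, B_K is the smallest closed ideal of B with which K is associated. -/

import Mathlib

open scoped RightActions

/-- The closed linear span of a subset of a topological `ℂ`-module. -/
noncomputable def clSpan {M : Type*} [AddCommMonoid M] [Module ℂ M] [TopologicalSpace M]
    (S : Set M) : Set M :=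
  closure (Submodule.span ℂ S : Set M)

/-- A subset is a (complex) linear subspace. -/
def IsLinearSubspace {M : Type*} [AddCommMonoid M] [Module ℂ M] (K : Set M) : Prop :=
  (0 : M) ∈ K ∧ (∀ x ∈ K, ∀ y ∈ K, x + y ∈ K) ∧ ∀ (c : ℂ), ∀ x ∈ K, c • x ∈ K

/-- A closed two-sided ideal of a C*-algebra `B`. -/
structure IsClosedTwoSidedIdeal {B : Type*} [NonUnitalCStarAlgebra B] (I : Set B) : Prop where
  isClosed : IsClosed I
  subspace : IsLinearSubspace I
  mul_mem_left : ∀ (b : B), ∀ a ∈ I, b * a ∈ I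
  mul_mem_right : ∀ (b : B), ∀ a ∈ I, a * b ∈ I

/-- The `CStarModule` class as it stood in Mathlib of December 2024: a *right* module
(`SMul Aᵐᵒᵖ E`), with `⟪x, y <• a⟫ = ⟪x, y⟫ * a`. -/
class CStarModuleOld (A E : Type*) [NonUnitalSemiring A] [StarRing A] [Module ℂ A]
    [AddCommGroup E] [Module ℂ E] [PartialOrder A] [SMul Aᵐᵒᵖ E] [Norm A] [Norm E]
    extends Inner A E where
  inner_add_right {x} {y} {z} : inner x (y + z) = inner x y + inner x z
  inner_self_nonneg {x} : 0 ≤ inner x x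
  inner_self {x} : inner x x = 0 ↔ x = 0
  inner_op_smul_right {a : A} {x y : E} : inner x (y <• a) = inner x y * a
  inner_smul_right_complex {z : ℂ} {x} {y} : inner x (z • y) = z • inner x y
  star_inner x y : star (inner x y) = inner y x
  norm_eq_sqrt_norm_inner_self x : ‖x‖ = Real.sqrt ‖inner x x‖

section HilbertModule

variable (B : Type*) [NonUnitalCStarAlgebra B] [PartialOrder B] [StarOrderedRing B]
variable {E : Type*} [NormedAddCommGroup E] [NormedSpace ℂ E] [SMul Bᵐᵒᵖ E] [CStarModuleOld B E]

/-- `K ⊆ E` is an *ideal submodule* if it is the closed linear span of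
`{x <• i : x ∈ E, i ∈ I}` for some closed two-sided ideal `I` of `B`. -/
def IsIdealSubmodule (K : Set E) : Prop :=
  ∃ I : Set B, IsClosedTwoSidedIdeal I ∧
    K = clSpan {z : E | ∃ x : E, ∃ i ∈ I, z = x <• i}

/-- A *ternary ideal* of a Hilbert `B`-module `E`: a linear subspace `K` with
`x <• ⟪k, y⟫ ∈ K` for all `x y ∈ E` and `k ∈ K`. -/
def IsTernaryIdeal (K : Set E) : Prop :=
  IsLinearSubspace K ∧ ∀ (x y : E), ∀ k ∈ K, x <• (inner B k y : B) ∈ K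

/-- `B_S`: the closed linear span in `B` of all inner products of elements of `S`. -/
noncomputable def rangeIdeal (S : Set E) : Set B :=
  clSpan {b : B | ∃ k ∈ S, ∃ k' ∈ S, b = (inner B k k' : B)}

/-- The orthogonal complement of a subset of a Hilbert `B`-module. -/
def perp (S : Set E) : Set E :=
  {x : E | ∀ s ∈ S, (inner B x s : B) = 0}

end HilbertModule

/-!
For a closed ideal `I`, inner products against elements of `closure (span {x <• i})` stay in `I`,
so `B_K ⊆ I` whenever `K` is associated with `I`. Right multiplication by `B` preserves `K`, which
makes `B_K` a right ideal; it is self-adjoint because `star ⟪k, k'⟫ = ⟪k', k⟫`, hence two-sided.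
Finally every `k ∈ K` is a limit of elements `k <• b` with `b ∈ B_K`: with `a = ⟪k, k⟫` and
`b = a (a + δ)⁻¹` (continuous functional calculus, so `b ∈ B_K`) one has
`⟪k - k b, k - k b⟫ = (a - a b) - b (a - a b)`, of norm at most `(1 + ‖b‖) ‖a - a b‖ ≤ 2δ`.
-/

section ClSpan

variable {M N : Type*} [AddCommGroup M] [Module ℂ M] [TopologicalSpace M]
  [AddCommGroup N] [Module ℂ N] [TopologicalSpace N]

def IsLinearSubspace.toSubmodule {T : Set M} (h : IsLinearSubspace T) : Submodule ℂ M where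
  carrier := T
  zero_mem' := h.1
  add_mem' {a b} ha hb := h.2.1 a ha b hb
  smul_mem' c x hx := h.2.2 c x hx

lemma subset_clSpan (S : Set M) : S ⊆ clSpan S :=
  Submodule.subset_span.trans subset_closure

lemma isClosed_clSpan (S : Set M) : IsClosed (clSpan S) :=
  isClosed_closure

lemma clSpan_mono {S T : Set M} (h : S ⊆ T) : clSpan S ⊆ clSpan T :=
  closure_mono (Submodule.span_mono h)

lemma isLinearSubspace_clSpan [ContinuousAdd M] [ContinuousConstSMul ℂ M] (S : Set M) :
    IsLinearSubspace (clSpan S) :=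
  let P := (Submodule.span ℂ S).topologicalClosure
  ⟨P.zero_mem, fun _ hx _ hy => P.add_mem hx hy, fun c _ hx => P.smul_mem c hx⟩

lemma mapsTo_clSpan (f : M →L[ℂ] N) {S : Set M} {T : Set N} (hT : IsLinearSubspace T)
    (hTc : IsClosed T) (h : Set.MapsTo f S T) : Set.MapsTo f (clSpan S) T := by
  have hspan : Submodule.span ℂ S ≤ hT.toSubmodule.comap f.toLinearMap := Submodule.span_le.mpr h
  exact closure_minimal (fun y hy => hspan hy) (hTc.preimage f.continuous)

lemma clSpan_subset {S T : Set M} (hT : IsLinearSubspace T) (hTc : IsClosed T) (h : S ⊆ T) :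
    clSpan S ⊆ T :=
  closure_minimal (Submodule.span_le (p := hT.toSubmodule).mpr h) hTc

end ClSpan

namespace CStarModuleOld

variable {B : Type*} [NonUnitalCStarAlgebra B] [PartialOrder B]
variable {E : Type*} [NormedAddCommGroup E] [NormedSpace ℂ E] [SMul Bᵐᵒᵖ E] [CStarModuleOld B E]

attribute [simp] inner_add_right star_inner inner_op_smul_right inner_smul_right_complex

@[simp] lemma inner_op_smul_left {a : B} {x y : E} :
    inner B (x <• a) y = star a * inner B x y := by
  rw [← star_inner y, inner_op_smul_right, star_mul, star_inner]

@[simp] lemma inner_smul_left_complex {z : ℂ} {x y : E} :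
    inner B (z • x) y = star z • inner B x y := by
  rw [← star_inner y, inner_smul_right_complex, star_smul, star_inner]

@[simp] lemma inner_smul_left_real {z : ℝ} {x y : E} : inner B (z • x) y = z • inner B x y := by
  simpa using inner_smul_left_complex (B := B) (z := (z : ℂ)) (x := x) (y := y)

@[simp] lemma inner_smul_right_real {z : ℝ} {x y : E} : inner B x (z • y) = z • inner B x y := by
  simpa using inner_smul_right_complex (A := B) (z := (z : ℂ)) (x := x) (y := y)

@[simp] lemma inner_zero_right {x : E} : inner B x 0 = 0 := by
  simpa using inner_add_right (A := B) (x := x) (y := (0 : E)) (z := 0)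

@[simp] lemma inner_sub_right {x y z : E} : inner B x (y - z) = inner B x y - inner B x z := by
  rw [eq_sub_iff_add_eq, ← inner_add_right, sub_add_cancel]

@[simp] lemma inner_sub_left {x y z : E} : inner B (x - y) z = inner B x z - inner B y z := by
  rw [← star_inner, inner_sub_right, star_sub, star_inner, star_inner]

lemma ext_inner {u v : E} (h : ∀ z : E, (inner B z u : B) = inner B z v) : u = v := by
  have : (inner B (u - v) (u - v) : B) = 0 := by simp [h (u - v)]
  rwa [inner_self, sub_eq_zero] at this

lemma op_smul_op_smul (x : E) (a b : B) : (x <• a) <• b = x <• (a * b) :=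
  ext_inner (B := B) fun z => by simp only [inner_op_smul_right, mul_assoc]

lemma add_op_smul (x y : E) (b : B) : (x + y) <• b = x <• b + y <• b :=
  ext_inner (B := B) fun z => by simp only [inner_op_smul_right, inner_add_right, add_mul]

lemma smul_complex_op_smul (x : E) (c : ℂ) (b : B) : (c • x) <• b = c • (x <• b) :=
  ext_inner (B := B) fun z => by simp only [inner_op_smul_right, inner_smul_right_complex,
    smul_mul_assoc]

lemma norm_sq_eq {x : E} : ‖x‖ ^ 2 = ‖(inner B x x : B)‖ := by
  rw [norm_eq_sqrt_norm_inner_self (A := B) x, Real.sq_sqrt (norm_nonneg _)]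

lemma inner_sub_op_smul_self (k : E) (b : B) :
    (inner B (k - k <• b) (k - k <• b) : B)
      = (inner B k k - inner B k k * b) - star b * (inner B k k - inner B k k * b) := by
  simp only [inner_sub_right, inner_sub_left, inner_op_smul_right, inner_op_smul_left]
  noncomm_ring

lemma norm_op_smul_le (x : E) (b : B) : ‖x <• b‖ ≤ ‖x‖ * ‖b‖ := by
  refine (pow_le_pow_iff_left₀ (norm_nonneg _) (by positivity) two_ne_zero).mp ?_
  rw [norm_sq_eq (B := B), inner_op_smul_left, inner_op_smul_right, ← mul_assoc]
  calc ‖star b * inner B x x * b‖ ≤ ‖star b‖ * ‖(inner B x x : B)‖ * ‖b‖ := norm_mul₃_le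
    _ = (‖x‖ * ‖b‖) ^ 2 := by rw [norm_star, ← norm_sq_eq]; ring

noncomputable def rightActionCLM (b : B) : E →L[ℂ] E :=
  LinearMap.mkContinuous
    { toFun := fun x => x <• b
      map_add' := fun x y => add_op_smul x y b
      map_smul' := fun c x => smul_complex_op_smul x c b }
    ‖b‖ fun x => by simpa [mul_comm] using norm_op_smul_le x b

@[simp] lemma rightActionCLM_apply (b : B) (x : E) : rightActionCLM b x = x <• b := rfl

variable [StarOrderedRing B]

lemma inner_mul_inner_swap_le {x y : E} :
    (inner B y x : B) * inner B x y ≤ ‖x‖ ^ 2 • (inner B y y : B) := by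
  rcases eq_or_ne x 0 with rfl | hx
  · simp
  have hx : 0 < ‖x‖ := norm_pos_iff.mpr hx
  -- expand `0 ≤ ⟪x a - ‖x‖² y, x a - ‖x‖² y⟫` at `a = ⟪x, y⟫`
  have key : ∀ a : B, (0 : B) ≤ ‖x‖ ^ 2 • (star a * a) - ‖x‖ ^ 2 • (star a * inner B x y)
      - ‖x‖ ^ 2 • (inner B y x * a) + ‖x‖ ^ 2 • (‖x‖ ^ 2 • inner B y y) := fun a => by
    calc (0 : B) ≤ inner B (x <• a - ‖x‖ ^ 2 • y) (x <• a - ‖x‖ ^ 2 • y) := inner_self_nonneg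
      _ = star a * inner B x x * a - ‖x‖ ^ 2 • (star a * inner B x y)
          - ‖x‖ ^ 2 • (inner B y x * a) + ‖x‖ ^ 2 • (‖x‖ ^ 2 • inner B y y) := by
        simp only [inner_sub_right, inner_op_smul_right, inner_sub_left, inner_op_smul_left,
          inner_smul_left_real, inner_smul_right_real, sub_mul, smul_mul_assoc, smul_sub,
          mul_assoc]
        abel
      _ ≤ _ := by
        gcongr
        calc star a * inner B x x * a ≤ ‖(inner B x x : B)‖ • (star a * a) :=
              CStarAlgebra.star_left_conjugate_le_norm_smul (star_inner x x)
          _ = ‖x‖ ^ 2 • (star a * a) := by rw [norm_sq_eq (B := B)]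
  specialize key (inner B x y)
  simp only [star_inner, sub_self, zero_sub, le_neg_add_iff_add_le, add_zero] at key
  rwa [smul_le_smul_iff_of_pos_left (pow_pos hx _)] at key

lemma norm_inner_le {x y : E} : ‖(inner B x y : B)‖ ≤ ‖x‖ * ‖y‖ := by
  refine (pow_le_pow_iff_left₀ (norm_nonneg _) (by positivity) two_ne_zero).mp ?_
  calc ‖(inner B x y : B)‖ ^ 2 = ‖(inner B y x : B) * inner B x y‖ := by
        rw [← star_inner x y, CStarRing.norm_star_mul_self, pow_two]
    _ ≤ ‖‖x‖ ^ 2 • (inner B y y : B)‖ := by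
        refine CStarAlgebra.norm_le_norm_of_nonneg_of_le ?_ inner_mul_inner_swap_le
        rw [← star_inner x y]
        exact star_mul_self_nonneg _
    _ = (‖x‖ * ‖y‖) ^ 2 := by rw [norm_smul, ← norm_sq_eq]; simp [mul_pow]

noncomputable def innerRightCLM (x : E) : E →L[ℂ] B :=
  LinearMap.mkContinuous
    { toFun := fun y => inner B x y
      map_add' := fun _ _ => inner_add_right
      map_smul' := fun _ _ => inner_smul_right_complex }
    ‖x‖ fun _ => norm_inner_le

@[simp] lemma innerRightCLM_apply (x y : E) : innerRightCLM x y = (inner B x y : B) := rfl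

end CStarModuleOld

lemma star_mem_clSpan {A : Type*} [AddCommGroup A] [Module ℂ A] [StarAddMonoid A]
    [StarModule ℂ A] [TopologicalSpace A] [ContinuousStar A] {S : Set A}
    (hS : ∀ a ∈ S, star a ∈ S) {a : A} (ha : a ∈ clSpan S) : star a ∈ clSpan S := by
  have hspan : Set.MapsTo star (Submodule.span ℂ S : Set A) (Submodule.span ℂ S) := by
    intro b hb
    induction hb using Submodule.span_induction with
    | mem x hx => exact Submodule.subset_span (hS x hx)
    | zero => simp
    | add x y _ _ hx hy => simpa using add_mem hx hy
    | smul c x _ hx => simpa using Submodule.smul_mem _ (star c) hx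
  exact map_mem_closure continuous_star ha hspan

def associatedSubmodule {B : Type*} (E : Type*) [AddCommGroup E] [Module ℂ E]
    [TopologicalSpace E] [SMul Bᵐᵒᵖ E] (I : Set B) : Set E :=
  clSpan {z : E | ∃ x : E, ∃ i ∈ I, z = x <• i}

lemma associatedSubmodule_mono {B E : Type*} [AddCommGroup E] [Module ℂ E] [TopologicalSpace E]
    [SMul Bᵐᵒᵖ E] {I J : Set B} (h : I ⊆ J) :
    associatedSubmodule E I ⊆ associatedSubmodule E J :=
  clSpan_mono fun _ ⟨x, i, hi, hz⟩ => ⟨x, i, h hi, hz⟩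

section AssociatedSubmodule

open CStarModuleOld

variable {B : Type*} [NonUnitalCStarAlgebra B] [PartialOrder B]
variable {E : Type*} [NormedAddCommGroup E] [NormedSpace ℂ E] [SMul Bᵐᵒᵖ E] [CStarModuleOld B E]

lemma op_smul_mem_associatedSubmodule {I : Set B} (hI : ∀ b : B, ∀ a ∈ I, a * b ∈ I)
    {k : E} (hk : k ∈ associatedSubmodule E I) (b : B) : k <• b ∈ associatedSubmodule E I := by
  refine mapsTo_clSpan (rightActionCLM b) (isLinearSubspace_clSpan _) (isClosed_clSpan _) ?_ hk
  rintro _ ⟨x, i, hi, rfl⟩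
  rw [rightActionCLM_apply, CStarModuleOld.op_smul_op_smul]
  exact subset_clSpan _ ⟨x, i * b, hI b i hi, rfl⟩

lemma star_mem_rangeIdeal (S : Set E) {a : B} (ha : a ∈ rangeIdeal B S) :
    star a ∈ rangeIdeal B S := by
  refine star_mem_clSpan ?_ ha
  rintro _ ⟨k, hk, k', hk', rfl⟩
  exact ⟨k', hk', k, hk, star_inner k k'⟩

lemma mul_mem_rangeIdeal {S : Set E} (hS : ∀ b : B, ∀ k ∈ S, k <• b ∈ S) {a : B}
    (ha : a ∈ rangeIdeal B S) (b : B) : a * b ∈ rangeIdeal B S := by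
  refine mapsTo_clSpan ((ContinuousLinearMap.mul ℂ B).flip b) (isLinearSubspace_clSpan _)
    (isClosed_clSpan _) ?_ ha
  rintro _ ⟨k, hk, k', hk', rfl⟩
  exact subset_clSpan _ ⟨k, hk, k' <• b, hS b k' hk', by simp⟩

lemma isClosedTwoSidedIdeal_rangeIdeal {S : Set E} (hS : ∀ b : B, ∀ k ∈ S, k <• b ∈ S) :
    IsClosedTwoSidedIdeal (rangeIdeal B S) where
  isClosed := isClosed_clSpan _
  subspace := isLinearSubspace_clSpan _
  mul_mem_left b a ha := by
    simpa using star_mem_rangeIdeal S (mul_mem_rangeIdeal hS (star_mem_rangeIdeal S ha) (star b))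
  mul_mem_right b a ha := mul_mem_rangeIdeal hS ha b

variable [StarOrderedRing B]

lemma inner_mem_of_mem_associatedSubmodule {I : Set B} (hI : IsClosedTwoSidedIdeal I) (x : E)
    {k : E} (hk : k ∈ associatedSubmodule E I) : (inner B x k : B) ∈ I := by
  refine mapsTo_clSpan (innerRightCLM x) hI.subspace hI.isClosed ?_ hk
  rintro _ ⟨y, i, hi, rfl⟩
  rw [innerRightCLM_apply, inner_op_smul_right]
  exact hI.mul_mem_left _ i hi

lemma rangeIdeal_associatedSubmodule_subset {I : Set B} (hI : IsClosedTwoSidedIdeal I) :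
    rangeIdeal B (associatedSubmodule E I) ⊆ I :=
  clSpan_subset hI.subspace hI.isClosed fun _ ⟨k, _, _, hk', hb⟩ =>
    hb ▸ inner_mem_of_mem_associatedSubmodule hI k hk'

end AssociatedSubmodule

section FunctionalCalculus

variable {B : Type*} [NonUnitalCStarAlgebra B]

def IsClosedTwoSidedIdeal.toNonUnitalStarSubalgebra {J : Set B} (hJ : IsClosedTwoSidedIdeal J)
    (hstar : ∀ b ∈ J, star b ∈ J) : NonUnitalStarSubalgebra ℂ B where
  carrier := J
  zero_mem' := hJ.subspace.1
  add_mem' {a b} ha hb := hJ.subspace.2.1 a ha b hb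
  mul_mem' {a b} ha _ := hJ.mul_mem_right b a ha
  smul_mem' c x hx := hJ.subspace.2.2 c x hx
  star_mem' {a} ha := hstar a ha

lemma IsClosedTwoSidedIdeal.cfcₙ_mem {J : Set B} (hJ : IsClosedTwoSidedIdeal J)
    (hstar : ∀ b ∈ J, star b ∈ J) (f : ℝ → ℝ) {a : B} (ha : a ∈ J) : cfcₙ f a ∈ J :=
  _root_.cfcₙ_mem (s := hJ.toNonUnitalStarSubalgebra hstar) (hs := hJ.isClosed) f ha

variable [PartialOrder B] [StarOrderedRing B]

lemma norm_cfcₙ_div_add_le_one {a : B} (ha : 0 ≤ a) {δ : ℝ} (hδ : 0 < δ) :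
    ‖cfcₙ (fun t : ℝ => t / (t + δ)) a‖ ≤ 1 := by
  refine norm_cfcₙ_le fun t ht => ?_
  have ht : 0 ≤ t := quasispectrum_nonneg_of_nonneg a ha t ht
  rw [Real.norm_eq_abs, abs_of_nonneg (by positivity), div_le_one (by positivity)]
  linarith

lemma norm_sub_mul_cfcₙ_div_add_le {a : B} (ha : 0 ≤ a) {δ : ℝ} (hδ : 0 < δ) :
    ‖a - a * cfcₙ (fun t : ℝ => t / (t + δ)) a‖ ≤ δ := by
  have hcont : ContinuousOn (fun t : ℝ => t / (t + δ)) (quasispectrum ℝ a) :=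
    continuousOn_id.div (by fun_prop) fun t ht =>
      (add_pos_of_nonneg_of_pos (quasispectrum_nonneg_of_nonneg a ha t ht) hδ).ne'
  calc ‖a - a * cfcₙ (fun t : ℝ => t / (t + δ)) a‖
      = ‖cfcₙ (fun t : ℝ => t - t * (t / (t + δ))) a‖ := by
        rw [cfcₙ_sub (fun t : ℝ => t) _ a, cfcₙ_mul (fun t : ℝ => t) _ a, cfcₙ_id' ℝ a]
    _ ≤ δ := by
      refine norm_cfcₙ_le fun t ht => ?_
      have ht : 0 ≤ t := quasispectrum_nonneg_of_nonneg a ha t ht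
      have hsub : t - t * (t / (t + δ)) = δ * (t / (t + δ)) := by field_simp; ring
      rw [hsub, Real.norm_eq_abs, abs_of_nonneg (by positivity)]
      exact mul_le_of_le_one_right hδ.le ((div_le_one (by positivity)).mpr (by linarith))

end FunctionalCalculus

section Approximation

open CStarModuleOld

variable {B : Type*} [NonUnitalCStarAlgebra B] [PartialOrder B] [StarOrderedRing B]
variable {E : Type*} [NormedAddCommGroup E] [NormedSpace ℂ E] [SMul Bᵐᵒᵖ E] [CStarModuleOld B E]

lemma exists_norm_sub_op_smul_lt {J : Set B} (hJ : IsClosedTwoSidedIdeal J)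
    (hstar : ∀ b ∈ J, star b ∈ J) {k : E} (hk : (inner B k k : B) ∈ J) {ε : ℝ} (hε : 0 < ε) :
    ∃ b ∈ J, ‖k - k <• b‖ < ε := by
  set a : B := inner B k k
  have ha : 0 ≤ a := inner_self_nonneg
  have hδ : 0 < ε ^ 2 / 4 := by positivity
  set b := cfcₙ (fun t : ℝ => t / (t + ε ^ 2 / 4)) a
  refine ⟨b, hJ.cfcₙ_mem hstar _ hk, lt_of_pow_lt_pow_left₀ 2 hε.le ?_⟩
  calc ‖k - k <• b‖ ^ 2 = ‖(a - a * b) - star b * (a - a * b)‖ := by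
        rw [norm_sq_eq (B := B), inner_sub_op_smul_self]
    _ ≤ ‖a - a * b‖ + ‖b‖ * ‖a - a * b‖ := by
        rw [← norm_star b]; exact norm_sub_le_of_le le_rfl (norm_mul_le _ _)
    _ ≤ ε ^ 2 / 4 + 1 * (ε ^ 2 / 4) := by
        have hab := norm_sub_mul_cfcₙ_div_add_le ha hδ
        gcongr
        exact norm_cfcₙ_div_add_le_one ha hδ
    _ < ε ^ 2 := by linarith

lemma mem_associatedSubmodule_of_inner_self_mem {J : Set B} (hJ : IsClosedTwoSidedIdeal J)
    (hstar : ∀ b ∈ J, star b ∈ J) {k : E} (hk : (inner B k k : B) ∈ J) :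
    k ∈ associatedSubmodule E J := by
  refine closure_mono Submodule.subset_span (Metric.mem_closure_iff.mpr fun ε hε => ?_)
  obtain ⟨b, hb, hlt⟩ := exists_norm_sub_op_smul_lt hJ hstar hk hε
  exact ⟨k <• b, ⟨k, b, hb, rfl⟩, by rwa [dist_eq_norm]⟩

lemma subset_associatedSubmodule_rangeIdeal {S : Set E}
    (hS : IsClosedTwoSidedIdeal (rangeIdeal B S)) : S ⊆ associatedSubmodule E (rangeIdeal B S) :=
  fun k hk => mem_associatedSubmodule_of_inner_self_mem hS (fun _ => star_mem_rangeIdeal S)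
    (subset_clSpan _ ⟨k, hk, k, hk, rfl⟩)

end Approximation

theorem rangeIdeal_smallest_associated_ideal_general
    {B : Type*} [NonUnitalCStarAlgebra B] [PartialOrder B] [StarOrderedRing B]
    {E : Type*} [NormedAddCommGroup E] [NormedSpace ℂ E] [SMul Bᵐᵒᵖ E]
    [CStarModuleOld B E] (K : Set E) (hK : IsIdealSubmodule B K) :
    IsClosedTwoSidedIdeal (rangeIdeal B K) ∧
    K = clSpan {z : E | ∃ x : E, ∃ b ∈ rangeIdeal B K, z = x <• b} ∧
    ∀ I : Set B, IsClosedTwoSidedIdeal I →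
      K = clSpan {z : E | ∃ x : E, ∃ i ∈ I, z = x <• i} → rangeIdeal B K ⊆ I := by
  obtain ⟨I, hI, rfl⟩ := hK
  have hBK : IsClosedTwoSidedIdeal (rangeIdeal B (associatedSubmodule E I)) :=
    isClosedTwoSidedIdeal_rangeIdeal fun b _ hk =>
      op_smul_mem_associatedSubmodule hI.mul_mem_right hk b
  refine ⟨hBK, (subset_associatedSubmodule_rangeIdeal hBK).antisymm
    (associatedSubmodule_mono (rangeIdeal_associatedSubmodule_subset hI)), fun J hJ hIJ => ?_⟩
  rw [hIJ]
  exact rangeIdeal_associatedSubmodule_subset hJ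

/-- for an ideal submodule `K` of `E`, `B_K` is a closed two-sided ideal of
`B`, `K` is the ideal submodule associated with `B_K`, and `B_K` is contained in every
closed two-sided ideal `I` of `B` with which `K` is associated. -/
theorem rangeIdeal_smallest_associated_ideal
    {B : Type*} [NonUnitalCStarAlgebra B] [PartialOrder B] [StarOrderedRing B]
    {E : Type*} [NormedAddCommGroup E] [NormedSpace ℂ E] [SMul Bᵐᵒᵖ E]
    [CStarModuleOld B E] [CompleteSpace E] (K : Set E) (hK : IsIdealSubmodule B K) :
    IsClosedTwoSidedIdeal (rangeIdeal B K) ∧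
    K = clSpan {z : E | ∃ x : E, ∃ b ∈ rangeIdeal B K, z = x <• b} ∧
    ∀ I : Set B, IsClosedTwoSidedIdeal I →
      K = clSpan {z : E | ∃ x : E, ∃ i ∈ I, z = x <• i} → rangeIdeal B K ⊆ I :=
  rangeIdeal_smallest_associated_ideal_general K hK
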